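/- Let f : Finset E → ℝ be monotone submodular with f(∅) = 0, and let G_m be the greedy solution of size m and OPT an optimal solution of size m (as in the standard greedy setting). Then f(G_m) ≥ (1 - (1 - 1/m)^m)·f(OPT) ≥ (1 - 1/e)·f(OPT); in particular f(G_m) ≥ (1/2)·f(OPT). -/

import Mathlib

/-!
Greedy step `i` gains at least as much as any single element, and by submodularity the `m`
elements of `OPT` together gain at most the sum of their marginal gains, so
`f OPT - f (G i) ≤ m * (f (G (i+1)) - f (G i))`. Hence the gap to `f OPT` shrinks by a factor
`1 - 1/m` at each step, and `(1 - 1/m)^m ≤ exp (-1) < 1/2`.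
-/

section Submodular

variable {E : Type*} [DecidableEq E] {f : Finset E → ℝ}

lemma sub_le_sum_marginal (hmono : Monotone f)
    (hsubmod : ∀ A B : Finset E, A ⊆ B → ∀ x ∉ B,
      f (insert x B) - f B ≤ f (insert x A) - f A)
    (A S : Finset E) :
    f (A ∪ S) - f A ≤ ∑ x ∈ S, (f (insert x A) - f A) := by
  induction S using Finset.induction_on with
  | empty => simp
  | @insert y S hy ih =>
    rw [Finset.sum_insert hy, Finset.union_insert]
    by_cases hyAS : y ∈ A ∪ S
    · have hgain : f A ≤ f (insert y A) := hmono (Finset.subset_insert _ _)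
      rw [Finset.insert_eq_self.mpr hyAS]
      linarith
    · have hdim := hsubmod A (A ∪ S) Finset.subset_union_left y hyAS
      linarith

lemma sub_le_card_mul_of_marginal_le (hmono : Monotone f)
    (hsubmod : ∀ A B : Finset E, A ⊆ B → ∀ x ∉ B,
      f (insert x B) - f B ≤ f (insert x A) - f A)
    {A : Finset E} {δ : ℝ} (hδ : ∀ x, f (insert x A) - f A ≤ δ) (S : Finset E) :
    f S - f A ≤ S.card * δ := by
  have hS : f S ≤ f (A ∪ S) := hmono Finset.subset_union_right
  calc f S - f A ≤ f (A ∪ S) - f A := by linarith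
    _ ≤ ∑ x ∈ S, (f (insert x A) - f A) := sub_le_sum_marginal hmono hsubmod A S
    _ ≤ S.card * δ := by
      simpa only [nsmul_eq_mul] using Finset.sum_le_card_nsmul S _ δ fun x _ => hδ x

end Submodular

lemma sub_le_one_sub_inv_pow_mul_sub {a : ℕ → ℝ} {d m : ℝ} (hm : 1 ≤ m)
    (hstep : ∀ i, d - a i ≤ m * (a (i + 1) - a i)) (n : ℕ) :
    d - a n ≤ (1 - 1 / m) ^ n * (d - a 0) := by
  have hm0 : 0 < m := by linarith
  have hc : 0 ≤ 1 - 1 / m := by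
    rw [sub_nonneg, div_le_one hm0]
    exact hm
  induction n with
  | zero => simp
  | succ n ih =>
    have hcontract : d - a (n + 1) ≤ (1 - 1 / m) * (d - a n) := by
      have hgain : (d - a n) / m ≤ a (n + 1) - a n := by
        rw [div_le_iff₀ hm0]
        linarith [hstep n]
      have hexpand : (1 - 1 / m) * (d - a n) = (d - a n) - (d - a n) / m := by ring
      linarith
    calc d - a (n + 1) ≤ (1 - 1 / m) * (d - a n) := hcontract
      _ ≤ (1 - 1 / m) * ((1 - 1 / m) ^ n * (d - a 0)) := mul_le_mul_of_nonneg_left ih hc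
      _ = (1 - 1 / m) ^ (n + 1) * (d - a 0) := by ring

lemma one_sub_inv_pow_le_inv_exp_one {m : ℕ} (hm : 1 ≤ m) :
    (1 - 1 / (m : ℝ)) ^ m ≤ 1 / Real.exp 1 := by
  rw [one_div (Real.exp 1), ← Real.exp_neg]
  exact Real.one_sub_div_pow_le_exp_neg (by exact_mod_cast hm)

theorem greedy_one_minus_inv_e_approximation_general {E : Type*} [DecidableEq E]
    (f : Finset E → ℝ)
    (hmono : ∀ A B : Finset E, A ⊆ B → f A ≤ f B)
    (hsubmod : ∀ A B : Finset E, A ⊆ B → ∀ x ∉ B,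
      f (insert x B) - f B ≤ f (insert x A) - f A)
    (hempty : f ∅ = 0)
    (m : ℕ) (hm : 1 ≤ m) (G : ℕ → Finset E)
    (hG0 : G 0 = ∅)
    (hgreedy : ∀ i, ∀ x : E, f (insert x (G i)) - f (G i) ≤ f (G (i + 1)) - f (G i))
    (OPT : Finset E) (hcard : OPT.card = m) :
    f (G m) ≥ (1 - (1 - 1 / (m : ℝ)) ^ m) * f OPT ∧
    f (G m) ≥ (1 - 1 / Real.exp 1) * f OPT ∧
    f (G m) ≥ (1 / 2) * f OPT := by
  have hmono' : Monotone f := fun A B hAB => hmono A B hAB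
  have hstep : ∀ i, f OPT - f (G i) ≤ m * (f (G (i + 1)) - f (G i)) := fun i => by
    simpa only [hcard] using sub_le_card_mul_of_marginal_le hmono' hsubmod (hgreedy i) OPT
  have hdecay := sub_le_one_sub_inv_pow_mul_sub (by exact_mod_cast hm) hstep m
  rw [hG0, hempty, sub_zero] at hdecay
  have hOPT : 0 ≤ f OPT := hempty ▸ hmono' (Finset.empty_subset OPT)
  have hexp : (1 - 1 / (m : ℝ)) ^ m ≤ 1 / Real.exp 1 := one_sub_inv_pow_le_inv_exp_one hm
  have hhalf : 1 / Real.exp 1 ≤ 1 / 2 := by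
    rw [one_div (Real.exp 1), ← Real.exp_neg]
    exact Real.exp_neg_one_lt_half.le
  refine ⟨by linarith, ?_, ?_⟩
  · linarith [mul_le_mul_of_nonneg_right hexp hOPT]
  · linarith [mul_le_mul_of_nonneg_right (hexp.trans hhalf) hOPT]

/-- Standard greedy guarantee for monotone submodular maximization:
`f(G_m) ≥ (1 - (1 - 1/m)^m)·f(OPT) ≥ (1 - 1/e)·f(OPT) ≥ (1/2)·f(OPT)`. -/
theorem greedy_one_minus_inv_e_approximation {E : Type*} [Fintype E] [DecidableEq E]
    (f : Finset E → ℝ)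
    (hmono : ∀ A B : Finset E, A ⊆ B → f A ≤ f B)
    (hsubmod : ∀ A B : Finset E, A ⊆ B → ∀ x ∉ B,
      f (insert x B) - f B ≤ f (insert x A) - f A)
    (hempty : f ∅ = 0)
    (m : ℕ) (hm : 1 ≤ m) (g : ℕ → E) (G : ℕ → Finset E)
    (hG0 : G 0 = ∅) (hGs : ∀ i, G (i + 1) = insert (g i) (G i))
    (hgreedy : ∀ i, ∀ x : E, f (insert x (G i)) - f (G i) ≤ f (G (i + 1)) - f (G i))
    (OPT : Finset E) (hcard : OPT.card = m)
    (hopt : ∀ A : Finset E, A.card = m → f A ≤ f OPT) :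
    f (G m) ≥ (1 - (1 - 1 / (m : ℝ)) ^ m) * f OPT ∧
    f (G m) ≥ (1 - 1 / Real.exp 1) * f OPT ∧
    f (G m) ≥ (1 / 2) * f OPT :=
  greedy_one_minus_inv_e_approximation_general f hmono hsubmod hempty m hm G hG0 hgreedy OPT hcard
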